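/- Monotonicity of memorization under partition refinement: Let M = {π_1, …, π_M} be a finite ordered set of masked positions and let q : Finset → position → ℝ be a per-token recovery probability function, where q(U, π) ∈ [0,1] is the probability of correctly recovering token π given observed set U. Assume monotonicity: U ⊆ W implies q(U, π) ≤ q(W, π) for all π ∉ W. For a partition of the ordered list (π_1,…,π_M) into N consecutive chunks Δ_1,…,Δ_N, define the success probability P(𝒫) = ∏_{k=1}^N ∏_{π ∈ Δ_k} q(U_{k-1}, π), where U_0 is the initially observed set and U_k = U_{k-1} ∪ Δ_k. Then if partition 𝒫₁ refines partition 𝒫₂ (each chunk of 𝒫₂ is a union of consecutive chunks of 𝒫₁), we have P(𝒫₁) ≥ P(𝒫₂). -/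

import Mathlib

/-!
Refining a partition can only move the start of the chunk containing a given token to the
right, so every token is recovered from a larger observed set, which still excludes the token
itself. Monotonicity of `q` then compares the products factor by factor.
-/

open Finset

/-- The success probability of a partition of the fixed recovery order
`σ : Fin M → Fin L` into consecutive chunks, the partition being encoded by its set of
chunk boundaries `B ⊆ {0, …, M}` (with `0 ∈ B` and `M ∈ B`).  Token `σ j` is recovered
in the chunk starting at the largest boundary `≤ j`, and at that moment the observed
set consists of the initially observed tokens `U0` together with all tokens recovered
in strictly earlier chunks. -/
noncomputable def successProb {L M : ℕ} (q : Finset (Fin L) → Fin L → ℝ)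
    (U0 : Finset (Fin L)) (σ : Fin M → Fin L) (B : Finset ℕ) : ℝ :=
  ∏ j : Fin M,
    q (U0 ∪ (Finset.univ.filter
        (fun i : Fin M => (i : ℕ) < (B.filter (· ≤ (j : ℕ))).sup id)).image σ) (σ j)

def chunkStart (B : Finset ℕ) (j : ℕ) : ℕ :=
  (B.filter (· ≤ j)).sup id

theorem chunkStart_le (B : Finset ℕ) (j : ℕ) : chunkStart B j ≤ j :=
  Finset.sup_le fun _ hx => (mem_filter.mp hx).2

theorem chunkStart_mono {B₁ B₂ : Finset ℕ} (h : B₂ ⊆ B₁) (j : ℕ) :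
    chunkStart B₂ j ≤ chunkStart B₁ j :=
  sup_mono (filter_subset_filter _ h)

def recoveredBefore {α : Type*} [DecidableEq α] {M : ℕ} (σ : Fin M → α) (a : ℕ) : Finset α :=
  (univ.filter fun i : Fin M => (i : ℕ) < a).image σ

theorem recoveredBefore_mono {α : Type*} [DecidableEq α] {M : ℕ} (σ : Fin M → α) {a b : ℕ}
    (hab : a ≤ b) : recoveredBefore σ a ⊆ recoveredBefore σ b :=
  image_subset_image fun i hi => by
    simp only [mem_filter, mem_univ, true_and] at hi ⊢
    omega

theorem apply_notMem_recoveredBefore {α : Type*} [DecidableEq α] {M : ℕ} {σ : Fin M → α}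
    (hσ : Function.Injective σ) {j : Fin M} {a : ℕ} (ha : a ≤ j) :
    σ j ∉ recoveredBefore σ a := by
  simp only [recoveredBefore, mem_image, mem_filter, mem_univ, true_and, not_exists, not_and]
  intro i hi hij
  exact (lt_of_lt_of_le hi ha).ne (congrArg Fin.val (hσ hij))

theorem successProb_eq_prod_recoveredBefore {L M : ℕ} (q : Finset (Fin L) → Fin L → ℝ)
    (U0 : Finset (Fin L)) (σ : Fin M → Fin L) (B : Finset ℕ) :
    successProb q U0 σ B =
      ∏ j : Fin M, q (U0 ∪ recoveredBefore σ (chunkStart B j)) (σ j) :=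
  rfl

theorem successProb_le_of_refines_general {L M : ℕ} (q : Finset (Fin L) → Fin L → ℝ)
    (U0 : Finset (Fin L)) (σ : Fin M → Fin L)
    (hσ : Function.Injective σ)
    (hU0 : ∀ j : Fin M, σ j ∉ U0)
    (hq0 : ∀ U π, 0 ≤ q U π)
    (hmono : ∀ U W π, U ⊆ W → π ∉ W → q U π ≤ q W π)
    (B₁ B₂ : Finset ℕ)
    (href : B₂ ⊆ B₁) :
    successProb q U0 σ B₂ ≤ successProb q U0 σ B₁ := by
  simp only [successProb_eq_prod_recoveredBefore]
  refine prod_le_prod (fun _ _ => hq0 _ _) fun j _ => hmono _ _ _ ?_ ?_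
  · exact union_subset_union_right (recoveredBefore_mono σ (chunkStart_mono href j))
  · exact notMem_union.mpr ⟨hU0 j, apply_notMem_recoveredBefore hσ (chunkStart_le B₁ j)⟩

/-- **Monotonicity of memorization under partition refinement.**  If the per-token
recovery probability `q U π ∈ [0,1]` is monotone in the observed set `U` (for tokens
`π ∉ U`), and the partition encoded by `B₁` refines the one encoded by `B₂`
(i.e. `B₂ ⊆ B₁`), then the success probability under `B₁` is at least that under `B₂`. -/
theorem successProb_le_of_refines {L M : ℕ} (q : Finset (Fin L) → Fin L → ℝ)
    (U0 : Finset (Fin L)) (σ : Fin M → Fin L)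
    (hσ : Function.Injective σ)
    (hU0 : ∀ j : Fin M, σ j ∉ U0)
    (hq0 : ∀ U π, 0 ≤ q U π) (hq1 : ∀ U π, q U π ≤ 1)
    (hmono : ∀ U W π, U ⊆ W → π ∉ W → q U π ≤ q W π)
    (B₁ B₂ : Finset ℕ)
    (h0₁ : 0 ∈ B₁) (hM₁ : M ∈ B₁) (hle₁ : ∀ x ∈ B₁, x ≤ M)
    (h0₂ : 0 ∈ B₂) (hM₂ : M ∈ B₂) (hle₂ : ∀ x ∈ B₂, x ≤ M)
    (href : B₂ ⊆ B₁) :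
    successProb q U0 σ B₂ ≤ successProb q U0 σ B₁ :=
  successProb_le_of_refines_general q U0 σ hσ hU0 hq0 hmono B₁ B₂ href
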